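/- arXiv:2401.16804 — 3 statements merged into one kernel-verified Lean document; each statement's English description precedes it below -/
import Mathlib

section
/- The GCD output is a maximum-likelihood solution: if GCD terminates because the current partial TEP e_R^{(ℓ)} satisfies γ(e_R^{(ℓ)}) ≥ γ(e_opt), where partial TEPs are enumerated in order of non-decreasing γ and e_opt is the lightest valid TEP found among re-encoded patterns e^{(j)} = (s - e_R^{(j)} P^T, e_R^{(j)}) for j < ℓ, then γ(e_opt) ≤ γ(e) for all valid TEPs e. -/
/-- Soft weight of a binary vector with respect to nonnegative weights. -/
def softW {α : Type*} [Fintype α] (w : α → ℝ) (e : α → ZMod 2) : ℝ :=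
  ∑ i, ((e i).val : ℝ) * w i

/-- Hamming weight of a binary vector. -/
def hamW {α : Type*} [Fintype α] [DecidableEq α] (e : α → ZMod 2) : ℕ :=
  (Finset.univ.filter fun i => e i ≠ 0).card

/-- `a` is strictly prior to `b` in lexicographic order (first coordinate most significant). -/
def lexPrior {n : ℕ} (a b : Fin n → ZMod 2) : Prop :=
  ∃ i, (∀ j, j < i → a j = b j) ∧ (a i).val < (b i).val

/-!
Every valid TEP is the re-encoding `(s - e_R Pᵀ, e_R)` of its own partial pattern `e_R`, which
occurs in the enumeration at some index `j`. If `j < ℓ`, that re-encoding was examined and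
`e_opt` is at least as light. Otherwise `γ(e_R) ≥ γ(e_R^{(ℓ)}) ≥ γ(e_opt)` by monotonicity of
the enumeration and the stopping rule, and `γ(e) ≥ γ(e_R)` because the weights are nonnegative.
-/

open Matrix

section SoftWeight

variable {α β : Type*} [Fintype α] [Fintype β]

lemma softW_nonneg {w : α → ℝ} (hw : ∀ i, 0 ≤ w i) (e : α → ZMod 2) : 0 ≤ softW w e :=
  Finset.sum_nonneg fun i _ => mul_nonneg (Nat.cast_nonneg _) (hw i)

lemma softW_sumElim (w : α ⊕ β → ℝ) (a : α → ZMod 2) (b : β → ZMod 2) :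
    softW w (Sum.elim a b) = softW (w ∘ Sum.inl) a + softW (w ∘ Sum.inr) b := by
  simp [softW, Fintype.sum_sum_type]

lemma softW_inr_le_softW_sumElim {w : α ⊕ β → ℝ} (hw : ∀ i, 0 ≤ w i)
    (a : α → ZMod 2) (b : β → ZMod 2) :
    softW (w ∘ Sum.inr) b ≤ softW w (Sum.elim a b) := by
  rw [softW_sumElim]
  exact le_add_of_nonneg_left (softW_nonneg (fun i => hw (Sum.inl i)) a)

end SoftWeight

lemma eq_sumElim_of_fromCols_one_mulVec_eq {m n R : Type*} [Fintype m] [DecidableEq m]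
    [Fintype n] [Ring R] (P : Matrix m n R) {s : m → R} {e : m ⊕ n → R}
    (he : fromCols 1 P *ᵥ e = s) :
    e = Sum.elim (s - P *ᵥ (e ∘ Sum.inr)) (e ∘ Sum.inr) := by
  rw [fromCols_mulVec, one_mulVec] at he
  subst he
  ext (i | i) <;> simp

theorem stmt_5_general (m k : ℕ) (P : Matrix (Fin m) (Fin k) (ZMod 2)) (s : Fin m → ZMod 2)
    (w : Fin m ⊕ Fin k → ℝ) (hw : ∀ i, 0 ≤ w i)
    (enum : Fin (2 ^ k) → Fin k → ZMod 2) (henum : Function.Bijective enum)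
    (hmono : ∀ j j' : Fin (2 ^ k), j ≤ j' →
      softW (fun t => w (Sum.inr t)) (enum j) ≤ softW (fun t => w (Sum.inr t)) (enum j'))
    (ℓ : Fin (2 ^ k)) (eopt : Fin m ⊕ Fin k → ZMod 2)
    (hbest : ∀ j, j < ℓ →
      softW w eopt ≤ softW w (Sum.elim (s - P.mulVec (enum j)) (enum j)))
    (hstop : softW w eopt ≤ softW (fun t => w (Sum.inr t)) (enum ℓ)) :
    ∀ e, (Matrix.fromCols 1 P).mulVec e = s → softW w eopt ≤ softW w e := by
  intro e he
  rw [eq_sumElim_of_fromCols_one_mulVec_eq P he]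
  obtain ⟨j, hj⟩ := henum.surjective (e ∘ Sum.inr)
  rw [← hj]
  rcases lt_or_ge j ℓ with hjℓ | hℓj
  · exact hbest j hjℓ
  · calc softW w eopt ≤ softW (w ∘ Sum.inr) (enum ℓ) := hstop
      _ ≤ softW (w ∘ Sum.inr) (enum j) := hmono ℓ j hℓj
      _ ≤ _ := softW_inr_le_softW_sumElim hw _ _

theorem stmt_5 (m k : ℕ) (P : Matrix (Fin m) (Fin k) (ZMod 2)) (s : Fin m → ZMod 2)
    (w : Fin m ⊕ Fin k → ℝ) (hw : ∀ i, 0 ≤ w i)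
    (enum : Fin (2 ^ k) → Fin k → ZMod 2) (henum : Function.Bijective enum)
    (hmono : ∀ j j' : Fin (2 ^ k), j ≤ j' →
      softW (fun t => w (Sum.inr t)) (enum j) ≤ softW (fun t => w (Sum.inr t)) (enum j'))
    (ℓ : Fin (2 ^ k)) (eopt : Fin m ⊕ Fin k → ZMod 2)
    (hopt : ∃ j, j < ℓ ∧ eopt = Sum.elim (s - P.mulVec (enum j)) (enum j))
    (hbest : ∀ j, j < ℓ →
      softW w eopt ≤ softW w (Sum.elim (s - P.mulVec (enum j)) (enum j)))
    (hstop : softW w eopt ≤ softW (fun t => w (Sum.inr t)) (enum ℓ)) :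
    ∀ e, (Matrix.fromCols 1 P).mulVec e = s → softW w eopt ≤ softW w e :=
  stmt_5_general m k P s w hw enum henum hmono ℓ eopt hbest hstop
end

section
/- Let e* = (e_L*, e_R*) be the unique lightest valid TEP. Let L_GCD = S_GCD ∪ T_GCD where S_GCD = {e_R : γ(e_R) < γ(e*)} and T_GCD = {e_R : γ(e_R) = γ(e*), e_R lexicographically before e_R*}, and let L_GND = S_GND ∪ T_GND where S_GND = {e ∈ F_2^N : γ(e) < γ(e*)} and T_GND = {e : γ(e) = γ(e*), e lexicographically before e*}. Then |L_GCD| ≤ |L_GND|, i.e., the number of guesses of GCD is at most that of GND. -/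
lemma append_zero_softW {m k : ℕ} (w : Fin (m + k) → ℝ) (eR : Fin k → ZMod 2) :
    softW w (Fin.append (fun _ => (0 : ZMod 2)) eR) = softW (fun j => w (Fin.natAdd m j)) eR := by
  unfold softW
  rw [Fin.sum_univ_add]
  simp [Fin.append_left, Fin.append_right]

lemma lexPrior_append {m k : ℕ} (eLs : Fin m → ZMod 2) (eRs eR : Fin k → ZMod 2)
    (h : lexPrior eR eRs) :
    lexPrior (Fin.append (fun _ => (0 : ZMod 2)) eR) (Fin.append eLs eRs) := by
  classical
  by_cases hL : ∀ j, eLs j = 0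
  · obtain ⟨i0, hpre, hlt⟩ := h
    refine ⟨Fin.natAdd m i0, ?_, ?_⟩
    · intro j hj
      by_cases hjm : (j : ℕ) < m
      · have hje : j = Fin.castAdd k ⟨(j : ℕ), hjm⟩ := by
          apply Fin.ext; rfl
        rw [hje, Fin.append_left, Fin.append_left, hL]
      · push_neg at hjm
        have hjk : (j : ℕ) - m < k := by omega
        have hje : j = Fin.natAdd m ⟨(j : ℕ) - m, hjk⟩ := by
          apply Fin.ext; simp [Fin.natAdd]; omega
        rw [hje, Fin.append_right, Fin.append_right]
        apply hpre
        simp only [Fin.lt_def, Fin.natAdd] at hj ⊢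
        omega
    · simpa [Fin.append_right] using hlt
  · push_neg at hL
    obtain ⟨j1, hj1⟩ := hL
    let S : Finset (Fin m) := Finset.univ.filter (fun j => eLs j ≠ 0)
    have hS : S.Nonempty := ⟨j1, by simp [S, hj1]⟩
    set j0 := S.min' hS with hj0def
    have hj0 : eLs j0 ≠ 0 := by
      have := S.min'_mem hS
      simpa [S] using this
    have hmin : ∀ j : Fin m, j < j0 → eLs j = 0 := by
      intro j hj
      by_contra hne
      have : j0 ≤ j := S.min'_le j (by simp [S, hne])
      exact absurd hj (not_lt.mpr this)
    refine ⟨Fin.castAdd k j0, ?_, ?_⟩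
    · intro j hj
      have hjm : (j : ℕ) < m := by
        have h1 : (j : ℕ) < (j0 : ℕ) := by simpa [Fin.lt_def] using hj
        exact lt_of_lt_of_le h1 (Nat.le_of_lt j0.isLt)
      have hje : j = Fin.castAdd k ⟨(j : ℕ), hjm⟩ := by
        apply Fin.ext; rfl
      rw [hje, Fin.append_left, Fin.append_left,
        hmin ⟨(j : ℕ), hjm⟩ (by simpa [Fin.lt_def] using hj)]
    · rw [Fin.append_left, Fin.append_left]
      have hv : (eLs j0).val ≠ 0 := by
        intro h0
        exact hj0 ((ZMod.val_eq_zero _).mp h0)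
      have hvlt : (eLs j0).val < 2 := ZMod.val_lt _
      simp only [ZMod.val_zero]
      omega

theorem stmt_7 (m k : ℕ) (w : Fin (m + k) → ℝ) (hw : ∀ i, 0 ≤ w i)
    (H : Matrix (Fin m) (Fin (m + k)) (ZMod 2)) (s : Fin m → ZMod 2)
    (eLs : Fin m → ZMod 2) (eRs : Fin k → ZMod 2)
    (hvalid : H.mulVec (Fin.append eLs eRs) = s)
    (huniq : ∀ e, H.mulVec e = s → e ≠ Fin.append eLs eRs →
      softW w (Fin.append eLs eRs) < softW w e) :
    ({eR : Fin k → ZMod 2 |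
        softW (fun j => w (Fin.natAdd m j)) eR < softW w (Fin.append eLs eRs) ∨
        (softW (fun j => w (Fin.natAdd m j)) eR = softW w (Fin.append eLs eRs) ∧
          lexPrior eR eRs)}).ncard ≤
      ({e : Fin (m + k) → ZMod 2 |
        softW w e < softW w (Fin.append eLs eRs) ∨
        (softW w e = softW w (Fin.append eLs eRs) ∧
          lexPrior e (Fin.append eLs eRs))}).ncard := by
  classical
  apply Set.ncard_le_ncard_of_injOn (fun eR => Fin.append (fun _ => (0 : ZMod 2)) eR)
  · intro eR hmem
    simp only [Set.mem_setOf_eq] at hmem ⊢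
    rw [append_zero_softW w eR]
    rcases hmem with h | ⟨heq, hlex⟩
    · exact Or.inl h
    · exact Or.inr ⟨heq, lexPrior_append eLs eRs eR hlex⟩
  · intro a _ b _ hab
    funext j
    have := congrFun hab (Fin.natAdd m j)
    simpa [Fin.append_right] using this
end

section
/- Over the binary symmetric channel (all weights equal 1, so soft weight = Hamming weight), if e* is the unique minimum-Hamming-weight valid TEP with w = W_H(e*), then the number of guesses made by GND (which checks all TEPs of weight < w, plus those of weight w up to e* in lexicographic order) is at least Σ_{i=0}^{w-1} C(N,i), while the number of guesses of GCD is at most min{2^K, Σ_{i=0}^{w-1} C(K,i)} + |{e_R ∈ F_2^K : W_H(e_R) = w}|. -/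
/-!
Before GND can reach `e*` in a weight-monotone enumeration it must list every word of weight
`< w = W_H(e*)`, and there are `∑_{i<w} C(N,i)` of them. GCD continues only while every word
tried so far is lighter than `w`, so it tries some of the `min{2^K, ∑_{i<w} C(K,i)}` lighter
words plus at most one heavier word; a heavier word exists only if `w ≤ K`, and then there is
at least one word of weight exactly `w` to pay for it.
-/

open Finset Function

lemma ncard_setOf_eq_card_filter {α : Type*} [Fintype α] (p : α → Prop) [DecidablePred p] :
    {x | p x}.ncard = #{x | p x} := by
  rw [← Set.ncard_coe_finset, coe_filter_univ]

section HammingWeight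

variable {α : Type*} [Fintype α] [DecidableEq α]

def supportEquiv : (α → ZMod 2) ≃ Finset α where
  toFun e := {i | e i ≠ 0}
  invFun s i := if i ∈ s then 1 else 0
  left_inv e := by
    funext i
    have hind : ∀ x : ZMod 2, (if x ≠ 0 then (1 : ZMod 2) else 0) = x := by decide
    simpa using hind (e i)
  right_inv s := by
    ext i
    simp

lemma hamW_eq_card_supportEquiv (e : α → ZMod 2) : hamW e = #(supportEquiv e) := rfl

lemma hamW_le_card (e : α → ZMod 2) : hamW e ≤ Fintype.card α :=
  hammingNorm_le_card_fintype

lemma ncard_hamW_eq (i : ℕ) :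
    {e : α → ZMod 2 | hamW e = i}.ncard = (Fintype.card α).choose i := by
  rw [ncard_setOf_eq_card_filter, ← card_univ, ← card_powersetCard]
  exact card_equiv supportEquiv fun e => by
    simp only [mem_filter, mem_univ, true_and, mem_powersetCard_univ]
    rfl

lemma ncard_hamW_lt (w : ℕ) :
    {e : α → ZMod 2 | hamW e < w}.ncard = ∑ i ∈ range w, (Fintype.card α).choose i := by
  rw [ncard_setOf_eq_card_filter,
    card_eq_sum_card_fiberwise (f := hamW) (t := range w) fun e he => by simpa using he]
  refine sum_congr rfl fun i hi => ?_
  rw [← ncard_hamW_eq, ncard_setOf_eq_card_filter, filter_filter]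
  congr 1
  ext e
  simp only [mem_filter, mem_univ, true_and, and_iff_right_iff_imp]
  rintro rfl
  exact mem_range.1 hi

lemma ncard_hamW_eq_pos {w : ℕ} {e : α → ZMod 2} (h : w ≤ hamW e) :
    0 < {e' : α → ZMod 2 | hamW e' = w}.ncard := by
  rw [ncard_hamW_eq]
  exact Nat.choose_pos (h.trans (hamW_le_card e))

end HammingWeight

section Enumeration

variable {ι β γ : Type*} [Finite ι] [LinearOrder ι]

lemma ncard_lt_le_ncard_forall_ne [Preorder γ] (enum : ι → β) (hsurj : Surjective enum)
    (wt : β → γ) (hmono : Monotone (wt ∘ enum)) (x : β) :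
    {b | wt b < wt x}.ncard ≤ {j | ∀ j' < j, enum j' ≠ x}.ncard := by
  have hsub : {b | wt b < wt x} ⊆ enum '' {j | ∀ j' < j, enum j' ≠ x} := fun b hb => by
    obtain ⟨j, rfl⟩ := hsurj b
    refine ⟨j, fun j' hj' hx => ?_, rfl⟩
    subst hx
    exact (hmono hj'.le).not_gt hb
  exact (Set.ncard_le_ncard hsub ((Set.toFinite _).image enum)).trans Set.ncard_image_le

/-- An enumeration that stops at the first index failing `p` visits at most one failing index,
and none if every index satisfies `p`. -/
lemma ncard_forall_lt_le (p : ι → Prop) (N : ℕ) (hN : (∃ j, ¬ p j) → 1 ≤ N) :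
    {j | ∀ j' < j, p j'}.ncard ≤ {j | p j}.ncard + N := by
  set F := {j | ¬ p j ∧ ∀ j' < j, p j'}
  have hF : F.ncard ≤ N := by
    rcases F.eq_empty_or_nonempty with hempty | ⟨j, hj⟩
    · simp [hempty]
    refine le_trans ((Set.ncard_le_one (Set.toFinite F)).2 fun a ha b hb => ?_) (hN ⟨j, hj.1⟩)
    exact le_antisymm (not_lt.1 fun hba => hb.1 (ha.2 b hba))
      (not_lt.1 fun hab => ha.1 (hb.2 a hab))
  calc {j | ∀ j' < j, p j'}.ncard
      ≤ ({j | p j} ∪ F).ncard :=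
        Set.ncard_le_ncard fun j hj => (em (p j)).imp id fun hpj => ⟨hpj, hj⟩
    _ ≤ {j | p j}.ncard + N := (Set.ncard_union_le _ _).trans (Nat.add_le_add_left hF _)

end Enumeration

theorem stmt_9_general (m k : ℕ) (estar : Fin m ⊕ Fin k → ZMod 2)
    (enumN : Fin (2 ^ (m + k)) → Fin m ⊕ Fin k → ZMod 2)
    (hN : Function.Bijective enumN)
    (hNmono : ∀ j j', j ≤ j' → hamW (enumN j) ≤ hamW (enumN j'))
    (enumK : Fin (2 ^ k) → Fin k → ZMod 2) (hK : Function.Bijective enumK) :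
    (∑ i ∈ Finset.range (hamW estar), (m + k).choose i) ≤
      ({j : Fin (2 ^ (m + k)) | ∀ j', j' < j → enumN j' ≠ estar}).ncard ∧
    ({j : Fin (2 ^ k) | ∀ j', j' < j → hamW (enumK j') < hamW estar}).ncard ≤
      min (2 ^ k) (∑ i ∈ Finset.range (hamW estar), k.choose i) +
        ({eR : Fin k → ZMod 2 | hamW eR = hamW estar}).ncard := by
  constructor
  · calc ∑ i ∈ range (hamW estar), (m + k).choose i
        = {e : Fin m ⊕ Fin k → ZMod 2 | hamW e < hamW estar}.ncard := by simp [ncard_hamW_lt]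
      _ ≤ _ := ncard_lt_le_ncard_forall_ne enumN hN.2 hamW (fun _ _ h => hNmono _ _ h) estar
  · have hlighter : {j | hamW (enumK j) < hamW estar}.ncard ≤
        min (2 ^ k) (∑ i ∈ range (hamW estar), k.choose i) := by
      refine le_min ((Set.ncard_le_card _).trans (by simp)) ?_
      calc {j | hamW (enumK j) < hamW estar}.ncard
          ≤ {e : Fin k → ZMod 2 | hamW e < hamW estar}.ncard :=
            Set.ncard_le_ncard_of_injOn enumK (fun _ hj => hj) hK.1.injOn
        _ = ∑ i ∈ range (hamW estar), k.choose i := by rw [ncard_hamW_lt, Fintype.card_fin]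
    exact (ncard_forall_lt_le _ _ fun ⟨_, hj⟩ => ncard_hamW_eq_pos (not_lt.1 hj)).trans
      (Nat.add_le_add_right hlighter _)

theorem stmt_9 (m k : ℕ) (P : Matrix (Fin m) (Fin k) (ZMod 2)) (s : Fin m → ZMod 2)
    (estar : Fin m ⊕ Fin k → ZMod 2)
    (hvalid : (Matrix.fromCols 1 P).mulVec estar = s)
    (huniq : ∀ e, (Matrix.fromCols 1 P).mulVec e = s → e ≠ estar →
      hamW estar < hamW e)
    (enumN : Fin (2 ^ (m + k)) → Fin m ⊕ Fin k → ZMod 2)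
    (hN : Function.Bijective enumN)
    (hNmono : ∀ j j', j ≤ j' → hamW (enumN j) ≤ hamW (enumN j'))
    (enumK : Fin (2 ^ k) → Fin k → ZMod 2) (hK : Function.Bijective enumK)
    (hKmono : ∀ j j', j ≤ j' → hamW (enumK j) ≤ hamW (enumK j')) :
    (∑ i ∈ Finset.range (hamW estar), (m + k).choose i) ≤
      ({j : Fin (2 ^ (m + k)) | ∀ j', j' < j → enumN j' ≠ estar}).ncard ∧
    ({j : Fin (2 ^ k) | ∀ j', j' < j → hamW (enumK j') < hamW estar}).ncard ≤
      min (2 ^ k) (∑ i ∈ Finset.range (hamW estar), k.choose i) +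
        ({eR : Fin k → ZMod 2 | hamW eR = hamW estar}).ncard :=
  stmt_9_general m k estar enumN hN hNmono enumK hK
end
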